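/- Let X be a topological space with bounded cochain complex B^•(X) (bounded real-valued singular cochains) and l1-chain complex L_•(X) (the completion of real singular chains in the l1-norm). Fix m ≥ 1. If the bounded cohomology groups satisfy Ĥ^m(X) = Ĥ^{m+1}(X) = 0, then the l1-homology group H^{l1}_m(X) = 0. -/

import Mathlib

/-!
Write `∂` for the boundary maps of `L_{k+3} → L_{k+2} → L_{k+1} → L_k`. Vanishing of
`Ĥ^{k+2}` says that the range of the coboundary `φ ↦ φ ∘ ∂` into `B^{k+2}` is the kernel of the
next coboundary, hence closed, so the open mapping theorem gives for every `φ ∈ B^{k+1}` some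
`ψ` with `ψ ∘ ∂ = φ ∘ ∂` and `‖ψ‖ ≤ C ‖φ ∘ ∂‖`. For a cycle `z`, vanishing of `Ĥ^{k+1}` makes
`φ - ψ` a coboundary, so `|φ z| = |ψ z| ≤ C ‖φ ∘ ∂‖ ‖z‖` for every `φ`. By Hahn–Banach, `z` is
then within `‖z‖ / 2` of the boundary of a chain of norm at most `C ‖z‖`; iterating on the
error and summing in the complete space `L_{k+2}` writes `z` as a boundary.
-/

open scoped ENNReal

noncomputable section

namespace L1Homology

/-- The standard topological `m`-simplex. -/
abbrev StdSpx (m : ℕ) := ↥(stdSimplex ℝ (Fin (m + 1)))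

/-- The affine inclusion `Δ^m → Δ^{m+1}` of the face opposite to the `i`-th vertex. -/
def faceMap {m : ℕ} (i : Fin (m + 2)) : C(StdSpx m, StdSpx (m + 1)) where
  toFun x := ⟨fun j => ∑ k ∈ Finset.univ.filter (fun k => i.succAbove k = j), x.1 k,
    ⟨fun j => Finset.sum_nonneg fun k _ => x.2.1 k, by
      rw [Finset.sum_fiberwise_of_maps_to (fun k _ => Finset.mem_univ (i.succAbove k)) x.1]
      exact x.2.2⟩⟩
  continuous_toFun := Continuous.subtype_mk
    (continuous_pi fun j => continuous_finset_sum _ fun k _ =>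
      (continuous_apply k).comp continuous_subtype_val) _

variable (X : Type*) [TopologicalSpace X]

/-- Singular `m`-simplices of `X`. -/
abbrev SingSimplex (m : ℕ) := C(StdSpx m, X)

variable {X}

/-- The `i`-th face of a singular `(m+1)`-simplex. -/
def face {m : ℕ} (i : Fin (m + 2)) (s : SingSimplex X (m + 1)) : SingSimplex X m :=
  s.comp (faceMap i)

/-- `L_m(X)`: the space of `ℓ¹`-chains of degree `m`, i.e. the completion of the space of
real singular `m`-chains in the `ℓ¹`-norm, realised as the Banach space of summable
real-valued functions on the set of singular `m`-simplices. -/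
abbrev L1C (X : Type*) [TopologicalSpace X] (m : ℕ) :=
  lp (fun _ : SingSimplex X m => ℝ) 1

/-- Push-forward of an `ℓ¹`-function along a map of index sets (summing over fibers). -/
def pushCore {S T : Type*} (g : S → T) (f : lp (fun _ : S => ℝ) 1) (t : T) : ℝ :=
  ∑' s : {s : S // g s = t}, f s.1

theorem summable_norm_coe {S : Type*} (f : lp (fun _ : S => ℝ) 1) :
    Summable fun s : S => ‖f s‖ := by
  simpa [ENNReal.toReal_one] using (lp.memℓp f).summable (by simp)

theorem summable_sigma_norm_coe {S T : Type*} (g : S → T) (f : lp (fun _ : S => ℝ) 1) :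
    Summable fun x : Σ t : T, {s : S // g s = t} => ‖f x.2.1‖ :=
  (Equiv.sigmaFiberEquiv g).summable_iff.mpr (summable_norm_coe f)

theorem summable_norm_pushCore {S T : Type*} (g : S → T) (f : lp (fun _ : S => ℝ) 1) :
    Summable fun t => ‖pushCore g f t‖ := by
  refine Summable.of_nonneg_of_le (fun t => norm_nonneg _)
    (fun t => norm_tsum_le_tsum_norm ((summable_sigma_norm_coe g f).sigma_factor t))
    (summable_sigma_norm_coe g f).sigma

theorem memℓp_pushCore {S T : Type*} (g : S → T) (f : lp (fun _ : S => ℝ) 1) :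
    Memℓp (pushCore g f) (1 : ℝ≥0∞) :=
  memℓp_gen (by simpa [ENNReal.toReal_one] using summable_norm_pushCore g f)

/-- Push-forward `ℓ¹(S) → ℓ¹(T)` along `g : S → T`. -/
def push {S T : Type*} (g : S → T) (f : lp (fun _ : S => ℝ) 1) : lp (fun _ : T => ℝ) 1 :=
  ⟨pushCore g f, memℓp_pushCore g f⟩

/-- The boundary operator `∂ : L_{m+1}(X) → L_m(X)`, the continuous extension of the
singular boundary: `∂ = ∑ i, (-1)^i (face i)_*`. -/
def bd (m : ℕ) : L1C X (m + 1) → L1C X m := fun f =>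
  ∑ i : Fin (m + 2), ((-1 : ℝ) ^ (i : ℕ)) • push (face i) f

end L1Homology

theorem Fin.succ_succAbove_comp_succAbove {n : ℕ} {i j : Fin (n + 2)} (h : i ≤ j) :
    j.succ.succAbove ∘ i.succAbove = i.castSucc.succAbove ∘ j.succAbove := by
  have := congrArg (fun f => ⇑(SimplexCategory.Hom.toOrderHom f)) (SimplexCategory.δ_comp_δ h)
  simp only [SimplexCategory.δ, SimplexCategory.comp_toOrderHom] at this
  exact this

/-- The term `(i, j)` with `j ≤ i` cancels against `(j, i + 1)`. -/
theorem Fin.sum_sum_neg_one_pow_smul_eq_zero {R A : Type*} [Ring R] [AddCommGroup A]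
    [Module R A] {n : ℕ} (F : Fin (n + 2) → Fin (n + 3) → A)
    (hF : ∀ i j : Fin (n + 2), i ≤ j → F i j.succ = F j i.castSucc) :
    ∑ i : Fin (n + 2), ∑ j : Fin (n + 3), ((-1 : R) ^ ((i : ℕ) + j)) • F i j = 0 := by
  let S : Finset (Fin (n + 2) × Fin (n + 3)) := {p | (p.2 : ℕ) ≤ p.1}
  have memS {p} : p ∈ S ↔ (p.2 : ℕ) ≤ p.1 := by simp [S]
  rw [← Finset.sum_product', Finset.univ_product_univ, ← Finset.sum_add_sum_compl S,
    add_eq_zero_iff_eq_neg, ← Finset.sum_neg_distrib]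
  refine Finset.sum_bij'
    (fun p hp => (p.2.castLT (lt_of_le_of_lt (memS.1 hp) p.1.isLt), p.1.succ))
    (fun q hq => (q.2.pred (by rintro h; simp [memS, h] at hq), q.1.castSucc))
    (fun p hp => ?_) (fun q hq => ?_) (fun p hp => ?_) (fun q hq => ?_) (fun p hp => ?_)
  · have := memS.1 hp
    simp only [Finset.mem_compl, memS, Fin.val_succ, Fin.val_castLT]
    omega
  · simp only [Finset.mem_compl, memS, not_le] at hq ⊢
    simp only [Fin.val_pred, Fin.val_castSucc]
    omega
  · simp
  · simp
  · obtain ⟨i, j⟩ := p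
    have hj : (j : ℕ) < n + 2 := lt_of_le_of_lt (memS.1 hp) i.isLt
    have hji : j.castLT hj ≤ i := memS.1 hp
    simp only
    rw [hF _ _ hji, Fin.castSucc_castLT, ← neg_smul, Fin.val_succ, Fin.val_castLT,
      add_comm (j : ℕ), add_right_comm, pow_succ, mul_neg_one, neg_neg]

section DualCriteria

open Metric Filter Topology

variable {E F : Type*} [NormedAddCommGroup E] [NormedSpace ℝ E]
  [NormedAddCommGroup F] [NormedSpace ℝ F]

/-- On the bounded cochains `B^•(X)` this is the coboundary. -/
def ContinuousLinearMap.dualMap (T : E →L[ℝ] F) : StrongDual ℝ F →L[ℝ] StrongDual ℝ E :=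
  precomp ℝ T

@[simp]
theorem ContinuousLinearMap.dualMap_apply (T : E →L[ℝ] F) (φ : StrongDual ℝ F) :
    T.dualMap φ = φ ∘L T :=
  rfl

theorem ContinuousLinearMap.mul_norm_le_of_forall_mem_closedBall {g : StrongDual ℝ E} {r u : ℝ}
    (hr : 0 ≤ r) (h : ∀ x ∈ closedBall (0 : E) r, g x ≤ u) : r * ‖g‖ ≤ u := by
  have hu : 0 ≤ u := by simpa using h 0 (mem_closedBall_self hr)
  rcases hr.eq_or_lt with rfl | hr
  · simpa using hu
  rw [← le_div_iff₀' hr]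
  refine g.opNorm_le_of_unit_norm (div_nonneg hu hr.le) fun x hx => ?_
  have hball : ∀ c : ℝ, |c| = r → c • x ∈ closedBall (0 : E) r := fun c hc => by
    simp [norm_smul, hx, hc]
  have h₁ := h _ (hball r (abs_of_pos hr))
  have h₂ := h _ (hball (-r) (by simp [abs_of_pos hr]))
  simp only [map_smul, smul_eq_mul, neg_mul] at h₁ h₂
  rw [le_div_iff₀' hr, Real.norm_eq_abs]
  calc r * |g x| = |r * g x| := by rw [abs_mul, abs_of_pos hr]
    _ ≤ u := abs_le.2 ⟨by linarith, h₁⟩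

theorem ContinuousLinearMap.mem_closure_image_closedBall_of_forall_abs_le (T : E →L[ℝ] F)
    {r : ℝ} (hr : 0 ≤ r) {y : F} (h : ∀ φ : StrongDual ℝ F, |φ y| ≤ r * ‖φ ∘L T‖) :
    y ∈ closure (T '' closedBall 0 r) := by
  by_contra hy
  have hconv : Convex ℝ (T '' closedBall (0 : E) r) :=
    (convex_closedBall _ _).linear_image T.toLinearMap
  obtain ⟨f, u, hfu, huy⟩ :=
    geometric_hahn_banach_closed_point hconv.closure isClosed_closure hy
  have hbound : r * ‖f ∘L T‖ ≤ u := mul_norm_le_of_forall_mem_closedBall hr fun x hx =>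
    (hfu _ (subset_closure ⟨x, hx, rfl⟩)).le
  linarith [le_abs_self (f y), h f]

theorem ContinuousLinearMap.exists_apply_eq_of_forall_approx [CompleteSpace E] (T : E →L[ℝ] F)
    (V : Submodule ℝ F) (hTV : ∀ x, T x ∈ V) {C : ℝ} (hC : 0 ≤ C)
    (happrox : ∀ y ∈ V, ∃ x, ‖x‖ ≤ C * ‖y‖ ∧ ‖y - T x‖ ≤ ‖y‖ / 2) {y : F} (hy : y ∈ V) :
    ∃ x, T x = y := by
  choose g hg using fun y : V => happrox y y.2
  let next (w : V) : V := ⟨w - T (g w), V.sub_mem w.2 (hTV _)⟩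
  let w (n : ℕ) : V := next^[n] ⟨y, hy⟩
  have hw_succ (n : ℕ) : (w (n + 1) : F) = w n - T (g (w n)) := by
    simp only [w, Function.iterate_succ_apply', next]
  have hw (n : ℕ) : ‖(w n : F)‖ ≤ (1 / 2) ^ n * ‖y‖ := by
    induction n with
    | zero => simp [w]
    | succ n ih =>
      rw [pow_succ', mul_assoc]
      calc ‖(w (n + 1) : F)‖ ≤ ‖(w n : F)‖ / 2 := by
            rw [hw_succ]; exact (hg (w n)).2
        _ ≤ 1 / 2 * ((1 / 2) ^ n * ‖y‖) := by linarith
  have hu (n : ℕ) : ‖g (w n)‖ ≤ C * ‖y‖ * (1 / 2) ^ n :=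
    calc ‖g (w n)‖ ≤ C * ‖(w n : F)‖ := (hg (w n)).1
      _ ≤ C * ((1 / 2) ^ n * ‖y‖) := by gcongr; exact hw n
      _ = C * ‖y‖ * (1 / 2) ^ n := by ring
  have hsum : Summable fun n => g (w n) :=
    .of_norm_bounded (summable_geometric_two.mul_left _) hu
  have hpartial (n : ℕ) : ∑ i ∈ Finset.range n, T (g (w i)) = y - w n := by
    induction n with
    | zero => simp [w]
    | succ n ih =>
      rw [Finset.sum_range_succ, ih, hw_succ]
      abel
  refine ⟨∑' n, g (w n), tendsto_nhds_unique ((hsum.hasSum.mapL T).tendsto_sum_nat) ?_⟩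
  simp only [hpartial]
  have hw0 : Tendsto (fun n => (w n : F)) atTop (𝓝 0) := by
    refine squeeze_zero_norm hw ?_
    simpa using (tendsto_pow_atTop_nhds_zero_of_lt_one (by norm_num : (0 : ℝ) ≤ 1 / 2)
      (by norm_num)).mul_const ‖y‖
  simpa using hw0.const_sub y

theorem ContinuousLinearMap.exists_apply_eq_of_forall_abs_dual_le [CompleteSpace E]
    (T : E →L[ℝ] F) (V : Submodule ℝ F) (hTV : ∀ x, T x ∈ V) {C : ℝ} (hC : 0 ≤ C)
    (hdual : ∀ y ∈ V, ∀ φ : StrongDual ℝ F, |φ y| ≤ C * ‖φ ∘L T‖ * ‖y‖) {y : F} (hy : y ∈ V) :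
    ∃ x, T x = y := by
  refine T.exists_apply_eq_of_forall_approx V hTV hC (fun y hy => ?_) hy
  rcases eq_or_ne y 0 with rfl | hy0
  · exact ⟨0, by simp⟩
  have hmem := T.mem_closure_image_closedBall_of_forall_abs_le (by positivity : 0 ≤ C * ‖y‖)
    fun φ => (hdual y hy φ).trans_eq (by ring)
  obtain ⟨_, ⟨x, hx, rfl⟩, hdist⟩ :=
    Metric.mem_closure_iff.1 hmem (‖y‖ / 2) (by positivity)
  exact ⟨x, by simpa using hx, by simpa [dist_eq_norm] using hdist.le⟩

/-- The open mapping theorem for `T.dualMap` onto its range, which is complete since closed. -/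
theorem ContinuousLinearMap.exists_norm_le_of_isClosed_range_dualMap (T : E →L[ℝ] F)
    (h : IsClosed (Set.range T.dualMap)) :
    ∃ C > 0, ∀ φ : StrongDual ℝ F,
      ∃ ψ : StrongDual ℝ F, ψ ∘L T = φ ∘L T ∧ ‖ψ‖ ≤ C * ‖φ ∘L T‖ := by
  have : IsClosed (T.dualMap.range : Set (StrongDual ℝ E)) := by rwa [LinearMap.coe_range]
  let D : StrongDual ℝ F →L[ℝ] T.dualMap.range := T.dualMap.rangeRestrict
  obtain ⟨C, hC, hpre⟩ := exists_preimage_norm_le (𝕜 := ℝ) (𝕜' := ℝ)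
    (E := StrongDual ℝ F) (F := T.dualMap.range) D
    fun ⟨_, ψ, hψ⟩ => ⟨ψ, Subtype.ext hψ⟩
  refine ⟨C, hC, fun φ => ?_⟩
  obtain ⟨ψ, hψ, hnorm⟩ := hpre (D φ)
  exact ⟨ψ, congrArg Subtype.val hψ, hnorm⟩

variable {W G : Type*} [NormedAddCommGroup W] [NormedSpace ℝ W]
  [NormedAddCommGroup G] [NormedSpace ℝ G]

theorem ContinuousLinearMap.exists_apply_eq_of_dual_exact [CompleteSpace E]
    (T₂ : W →L[ℝ] E) (T : E →L[ℝ] F) (S : F →L[ℝ] G)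
    (hT₂ : ∀ x, T (T₂ x) = 0) (hS : ∀ x, S (T x) = 0)
    (h₁ : ∀ φ : StrongDual ℝ F, (∀ x, φ (T x) = 0) → ∃ ψ : StrongDual ℝ G, ∀ y, φ y = ψ (S y))
    (h₂ : ∀ φ : StrongDual ℝ E, (∀ x, φ (T₂ x) = 0) → ∃ ψ : StrongDual ℝ F, ∀ y, φ y = ψ (T y))
    {y : F} (hy : S y = 0) : ∃ x, T x = y := by
  have hrange : Set.range T.dualMap = T₂.dualMap ⁻¹' {0} := by
    ext φ
    constructor
    · rintro ⟨ψ, rfl⟩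
      ext x
      simp [hT₂]
    · intro hφ
      obtain ⟨ψ, hψ⟩ := h₂ φ fun x => by simpa using congr($hφ x)
      exact ⟨ψ, by ext; simp [hψ]⟩
  obtain ⟨C, hC, hpre⟩ := T.exists_norm_le_of_isClosed_range_dualMap
    (hrange ▸ isClosed_singleton.preimage T₂.dualMap.continuous)
  refine T.exists_apply_eq_of_forall_abs_dual_le (LinearMap.ker S.toLinearMap) hS hC.le
    (fun y hy φ => ?_) hy
  obtain ⟨ψ, hψT, hψ⟩ := hpre φ
  obtain ⟨θ, hθ⟩ := h₁ (φ - ψ) fun x => by simpa [sub_eq_zero] using congr($hψT x).symm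
  have hSy : S y = 0 := hy
  have hφψ : φ y = ψ y := sub_eq_zero.1 (by simpa [hSy] using hθ y)
  calc |φ y| = ‖ψ y‖ := by rw [hφψ, Real.norm_eq_abs]
    _ ≤ ‖ψ‖ * ‖y‖ := ψ.le_opNorm y
    _ ≤ C * ‖φ ∘L T‖ * ‖y‖ := by gcongr

end DualCriteria

namespace L1Homology

section Push

variable {S T U : Type*}

theorem summable_coe (f : lp (fun _ : S => ℝ) 1) : Summable fun s : S => f s :=
  (summable_norm_coe f).of_norm

theorem push_add (g : S → T) (f f' : lp (fun _ : S => ℝ) 1) :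
    push g (f + f') = push g f + push g f' := by
  ext t
  exact ((summable_coe f).subtype _).tsum_add ((summable_coe f').subtype _)

theorem push_smul (g : S → T) (a : ℝ) (f : lp (fun _ : S => ℝ) 1) :
    push g (a • f) = a • push g f := by
  ext t
  exact tsum_mul_left

theorem norm_eq_tsum_norm (f : lp (fun _ : S => ℝ) 1) : ‖f‖ = ∑' s, ‖f s‖ := by
  simp [lp.norm_eq_tsum_rpow (by simp : 0 < (1 : ℝ≥0∞).toReal) f]

theorem norm_push_le (g : S → T) (f : lp (fun _ : S => ℝ) 1) : ‖push g f‖ ≤ ‖f‖ := by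
  have hsigma := summable_sigma_norm_coe g f
  rw [norm_eq_tsum_norm, norm_eq_tsum_norm]
  calc ∑' t, ‖push g f t‖
      ≤ ∑' t, ∑' s : {s : S // g s = t}, ‖f s.1‖ :=
        (summable_norm_pushCore g f).tsum_le_tsum
          (fun t => norm_tsum_le_tsum_norm (hsigma.sigma_factor t)) hsigma.sigma
    _ = ∑' x : Σ t : T, {s : S // g s = t}, ‖f x.2.1‖ :=
        (hsigma.tsum_sigma' fun t => hsigma.sigma_factor t).symm
    _ = ∑' s, ‖f s‖ := (Equiv.sigmaFiberEquiv g).tsum_eq fun s => ‖f s‖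

def pushL (g : S → T) : lp (fun _ : S => ℝ) 1 →L[ℝ] lp (fun _ : T => ℝ) 1 :=
  LinearMap.mkContinuous
    { toFun := push g
      map_add' := push_add g
      map_smul' := push_smul g }
    1 fun f => by simpa using norm_push_le g f

@[simp]
theorem coe_pushL (g : S → T) : ⇑(pushL g) = push g :=
  rfl

def fiberCompEquiv (g : T → U) (h : S → T) (u : U) :
    {s : S // g (h s) = u} ≃ Σ t : {t : T // g t = u}, {s : S // h s = t.1} where
  toFun s := ⟨⟨h s.1, s.2⟩, ⟨s.1, rfl⟩⟩
  invFun x := ⟨x.2.1, by rw [x.2.2]; exact x.1.2⟩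
  left_inv _ := rfl
  right_inv := by
    rintro ⟨⟨t, ht⟩, s, hs⟩
    obtain rfl : h s = t := hs
    rfl

theorem push_comp (g : T → U) (h : S → T) (f : lp (fun _ : S => ℝ) 1) :
    push (g ∘ h) f = push g (push h f) := by
  ext u
  have hsum : Summable fun x : Σ t : {t : T // g t = u}, {s : S // h s = t.1} => f x.2.1 :=
    (fiberCompEquiv g h u).symm.summable_iff.2 ((summable_coe f).subtype _)
  calc push (g ∘ h) f u
      = ∑' x : Σ t : {t : T // g t = u}, {s : S // h s = t.1}, f x.2.1 :=
        (fiberCompEquiv g h u).tsum_eq fun x => f x.2.1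
    _ = push g (push h f) u := hsum.tsum_sigma' fun t => hsum.sigma_factor t

end Push

theorem faceMap_apply {m : ℕ} (i : Fin (m + 2)) (x : StdSpx m) :
    faceMap i x = stdSimplex.map i.succAbove x := by
  ext j
  rw [stdSimplex.map_coe, FunOnFinite.linearMap_apply_apply]
  rfl

variable {X : Type*} [TopologicalSpace X]

theorem face_comp_face {m : ℕ} {i j : Fin (m + 2)} (h : i ≤ j) :
    face (X := X) i ∘ face j.succ = face j ∘ face i.castSucc := by
  ext s x : 2
  simp only [Function.comp_apply, face, ContinuousMap.comp_apply, faceMap_apply,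
    stdSimplex.map_comp_apply]
  rw [Fin.succ_succAbove_comp_succAbove h]

def bdL (m : ℕ) : L1C X (m + 1) →L[ℝ] L1C X m :=
  ∑ i : Fin (m + 2), ((-1 : ℝ) ^ (i : ℕ)) • pushL (face i)

theorem coe_bdL (m : ℕ) : ⇑(bdL (X := X) m) = bd m := by
  ext f : 1
  simp [bd, bdL]

theorem bdL_bdL (m : ℕ) (f : L1C X (m + 2)) : bdL m (bdL (m + 1) f) = 0 := by
  simp only [bdL, FunLike.coe_sum, FunLike.coe_smul, Finset.sum_apply, Pi.smul_apply, map_sum,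
    map_smul, coe_pushL, ← push_comp, Finset.smul_sum, smul_smul, ← pow_add]
  rw [Finset.sum_comm]
  simp only [add_comm]
  exact Fin.sum_sum_neg_one_pow_smul_eq_zero (R := ℝ) (fun i j => push (face i ∘ face j) f)
    fun i j h => by rw [face_comp_face h]

theorem l1Homology_vanishes_of_boundedCohomology_vanishes
    (X : Type*) [TopologicalSpace X] (k : ℕ)
    -- `Ĥ^{k+1}(X) = 0`
    (h₁ : ∀ φ : StrongDual ℝ (L1C X (k + 1)),
      (∀ c : L1C X (k + 2), φ (bd (k + 1) c) = 0) →
      ∃ ψ : StrongDual ℝ (L1C X k), ∀ c : L1C X (k + 1), φ c = ψ (bd k c))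
    -- `Ĥ^{k+2}(X) = 0`
    (h₂ : ∀ φ : StrongDual ℝ (L1C X (k + 2)),
      (∀ c : L1C X (k + 3), φ (bd (k + 2) c) = 0) →
      ∃ ψ : StrongDual ℝ (L1C X (k + 1)), ∀ c : L1C X (k + 2), φ c = ψ (bd (k + 1) c)) :
    -- `H^{ℓ¹}_{k+1}(X) = 0`
    ∀ c : L1C X (k + 1), bd k c = 0 → ∃ e : L1C X (k + 2), bd (k + 1) e = c := by
  intro c hc
  simp only [← coe_bdL] at h₁ h₂ hc ⊢
  exact ContinuousLinearMap.exists_apply_eq_of_dual_exact (bdL (k + 2)) (bdL (k + 1)) (bdL k)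
    (bdL_bdL (k + 1)) (bdL_bdL k) h₁ h₂ hc

end L1Homology

end
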